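/- arXiv:1804.07002 — 2 statements merged into one kernel-verified Lean document; each statement's English description precedes it below -/
import Mathlib

section
/- Let Z₁,…,Z_M be independent real random variables with E[|Z_i|] ≤ C·M^{-2} and |Z_i| ≤ C almost surely for each i. Then for any α > 0 there exists C_α depending only on C and α such that, for all sufficiently large M, P(Σ_{i=1}^M |Z_i| ≥ C_α·ln(M)) ≤ M^{-α}. -/
/-!
Chernoff's bound at `t = 1 / C`. On `[0, 1]` the exponential lies below its chord, so
`E[exp (|Z_i| / C)] ≤ 1 + (e - 1) E|Z_i| / C ≤ exp ((e - 1) M⁻²)`. By independence the moment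
generating function of `Σ |Z_i|` at `1 / C` is at most `exp ((e - 1) / M)`, hence
`P(Σ |Z_i| ≥ C (α + 1) ln M) ≤ exp ((e - 1) / M) M^{-(α + 1)}`, which is at most `M^{-α}`
as soon as `M ≥ 3 > e`.
-/

open MeasureTheory ProbabilityTheory Real

theorem Real.exp_le_one_add_exp_one_sub_one_mul {x : ℝ} (h0 : 0 ≤ x) (h1 : x ≤ 1) :
    exp x ≤ 1 + (exp 1 - 1) * x := by
  have h := convexOn_exp.2 (Set.mem_univ 0) (Set.mem_univ 1) (sub_nonneg.2 h1) h0 (by ring)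
  simp only [smul_eq_mul, mul_zero, mul_one, zero_add, exp_zero] at h
  linarith

namespace ProbabilityTheory

variable {Ω ι : Type*} {mΩ : MeasurableSpace Ω} {μ : Measure Ω}

theorem mgf_inv_le_exp_of_mem_Icc [IsProbabilityMeasure μ] {X : Ω → ℝ} {b : ℝ} (hb : 0 < b)
    (hX_meas : AEMeasurable X μ) (hX : ∀ᵐ ω ∂μ, X ω ∈ Set.Icc 0 b) :
    mgf X μ b⁻¹ ≤ exp ((exp 1 - 1) * μ[X] / b) := by
  have hX_int : Integrable X μ := .of_mem_Icc 0 b hX_meas hX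
  have h_lin : Integrable (fun ω ↦ (exp 1 - 1) * (b⁻¹ * X ω)) μ :=
    (hX_int.const_mul b⁻¹).const_mul _
  calc mgf X μ b⁻¹ ≤ ∫ ω, 1 + (exp 1 - 1) * (b⁻¹ * X ω) ∂μ := by
        refine integral_mono_ae (integrable_exp_mul_of_mem_Icc hX_meas hX)
          ((integrable_const 1).add h_lin) ?_
        filter_upwards [hX] with ω ⟨h0, h1⟩
        exact exp_le_one_add_exp_one_sub_one_mul (by positivity) (by rwa [inv_mul_le_one₀ hb])
    _ = 1 + (exp 1 - 1) * μ[X] / b := by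
        rw [integral_add (integrable_const 1) h_lin,
          integral_const, probReal_univ, one_smul, integral_const_mul, integral_const_mul]
        ring
    _ ≤ exp ((exp 1 - 1) * μ[X] / b) := by linarith [add_one_le_exp ((exp 1 - 1) * μ[X] / b)]

theorem measureReal_sum_ge_le_exp_mul_prod_mgf {X : ι → Ω → ℝ} (h_indep : iIndepFun X μ)
    (h_meas : ∀ i, Measurable (X i)) {s : Finset ι} {t : ℝ} (ht : 0 ≤ t)
    (h_int : ∀ i ∈ s, Integrable (fun ω ↦ exp (t * X i ω)) μ) (ε : ℝ) :
    μ.real {ω | ε ≤ ∑ i ∈ s, X i ω} ≤ exp (-t * ε) * ∏ i ∈ s, mgf (X i) μ t := by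
  have := h_indep.isProbabilityMeasure
  rw [← h_indep.mgf_sum h_meas]
  simpa only [Finset.sum_apply] using
    measure_ge_le_exp_mul_mgf ε ht (h_indep.integrable_exp_mul_sum h_meas h_int)

theorem measureReal_sum_ge_le_exp_of_mem_Icc {X : ι → Ω → ℝ} (h_indep : iIndepFun X μ)
    (h_meas : ∀ i, Measurable (X i)) {s : Finset ι} {b : ℝ} (hb : 0 < b)
    (hX : ∀ i ∈ s, ∀ᵐ ω ∂μ, X i ω ∈ Set.Icc 0 b) (ε : ℝ) :
    μ.real {ω | ε ≤ ∑ i ∈ s, X i ω} ≤ exp ((-ε + (exp 1 - 1) * ∑ i ∈ s, μ[X i]) / b) := by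
  have := h_indep.isProbabilityMeasure
  calc μ.real {ω | ε ≤ ∑ i ∈ s, X i ω}
      ≤ exp (-b⁻¹ * ε) * ∏ i ∈ s, mgf (X i) μ b⁻¹ :=
        measureReal_sum_ge_le_exp_mul_prod_mgf h_indep h_meas (by positivity)
          (fun i hi ↦ integrable_exp_mul_of_mem_Icc (h_meas i).aemeasurable (hX i hi)) ε
    _ ≤ exp (-b⁻¹ * ε) * ∏ i ∈ s, exp ((exp 1 - 1) * μ[X i] / b) := by
        gcongr with i hi
        · exact fun i _ ↦ mgf_nonneg
        · exact mgf_inv_le_exp_of_mem_Icc hb (h_meas i).aemeasurable (hX i hi)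
    _ = exp ((-ε + (exp 1 - 1) * ∑ i ∈ s, μ[X i]) / b) := by
        rw [← exp_sum, ← exp_add, Finset.mul_sum, ← Finset.sum_div]
        ring_nf

end ProbabilityTheory

/-- for independent random variables with `E[|Z_i|] ≤ C M⁻²` and `|Z_i| ≤ C`
a.s., the sum `Σ |Z_i|` exceeds `C_α ln M` with probability at most `M^{-α}`. -/
theorem sum_abs_concentration (C α : ℝ) (hC : 0 < C) (hα : 0 < α) :
    ∃ Cα > 0, ∃ M₀ : ℕ, ∀ M : ℕ, M₀ ≤ M →
      ∀ (Ω : Type) (_ : MeasurableSpace Ω) (μ : Measure Ω),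
        IsProbabilityMeasure μ →
        ∀ Z : Fin M → Ω → ℝ,
          (∀ i, Measurable (Z i)) →
          iIndepFun Z μ →
          (∀ i, ∫ ω, |Z i ω| ∂μ ≤ C * (M : ℝ) ^ (-2 : ℤ)) →
          (∀ i, ∀ᵐ ω ∂μ, |Z i ω| ≤ C) →
          μ {ω | Cα * Real.log M ≤ ∑ i, |Z i ω|} ≤ ENNReal.ofReal ((M : ℝ) ^ (-α)) := by
  refine ⟨C * (α + 1), by positivity, 3, fun M hM Ω _ μ _ Z hZ_meas h_indep h_int h_bdd ↦ ?_⟩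
  have hM : (3 : ℝ) ≤ M := by exact_mod_cast hM
  have h_log : 1 ≤ log M := by
    rw [le_log_iff_exp_le (by linarith)]
    linarith [exp_one_lt_d9]
  have h_drift : (exp 1 - 1) * ∑ i, ∫ ω, |Z i ω| ∂μ ≤ C * log M :=
    calc (exp 1 - 1) * ∑ i, ∫ ω, |Z i ω| ∂μ
        ≤ 2 * ∑ _i : Fin M, C * (M : ℝ) ^ (-2 : ℤ) :=
          mul_le_mul (by linarith [exp_one_lt_d9]) (Finset.sum_le_sum fun i _ ↦ h_int i)
            (Finset.sum_nonneg fun i _ ↦ integral_nonneg fun ω ↦ abs_nonneg _) zero_le_two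
      _ = C * (2 / M) := by
          simp only [Finset.sum_const, Finset.card_univ, Fintype.card_fin, nsmul_eq_mul]
          field_simp
      _ ≤ C * log M := by
          gcongr
          exact ((div_le_one (by positivity)).2 (by linarith)).trans h_log
  have h_tail := measureReal_sum_ge_le_exp_of_mem_Icc (s := Finset.univ)
    (h_indep.comp (fun _ ↦ abs) fun _ ↦ measurable_abs) (fun i ↦ (hZ_meas i).abs) hC
    (fun i _ ↦ (h_bdd i).mono fun ω h ↦ ⟨abs_nonneg _, h⟩) (C * (α + 1) * log M)
  rw [← ofReal_measureReal]
  refine ENNReal.ofReal_le_ofReal (h_tail.trans ?_)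
  rw [rpow_def_of_pos (by linarith), exp_le_exp, div_le_iff₀ hC]
  simp only [Function.comp_apply]
  linarith
end

section
/- Generalized conditional Gronwall lemma: Let T > 0, let e : [0,T] → [0,∞) be continuous with e(0) = 0, and let 0 < λ₂ < λ₃ and C > 0 be constants independent of N. Suppose that for every 0 < T₁ ≤ T, the condition max_{t∈[0,T₁]} e(t) ≤ N^{-λ₂} implies the differential inequality de(t)/dt ≤ C√(log N)·e(t) + C·log²(N)·N^{-λ₃} for 0 < t ≤ T₁. Then there exists N₀ ∈ ℕ depending only on C, T, λ₂, λ₃ such that for all N ≥ N₀, max_{t∈[0,T]} e(t) ≤ N^{-λ₂}. -/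
/-!
Let `T₁` be the first time `e` reaches `M = N ^ (-λ₂)`. Up to `T₁` the differential inequality
holds, and Grönwall's inequality started from `e 0 = 0` gives
`e T₁ ≤ C T log² N · exp (C T √(log N)) · N ^ (-λ₃)`. Since `exp (C T √(log N))` and `log² N` are
`N ^ o(1)`, this is `< N ^ (-λ₂)` for large `N`, contradicting `e T₁ = M`.
-/

open Real Set Filter Topology

theorem le_gronwallBound_of_deriv_le {f : ℝ → ℝ} {K ε a b : ℝ}
    (hf : ContinuousOn f (Icc a b)) (hf' : ∀ x ∈ Ioo a b, DifferentiableAt ℝ f x)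
    (bound : ∀ x ∈ Ioo a b, deriv f x ≤ K * f x + ε) :
    ∀ x ∈ Icc a b, f x ≤ gronwallBound (f a) K ε (x - a) := by
  set B := fun x => gronwallBound (f a) K ε (x - a)
  have hB : ∀ x, HasDerivAt B (K * B x + ε) x := fun x => hasDerivAt_gronwallBound_shift _ _ _ x a
  -- `exp (-K (x - a)) (f x - B x)` is antitone and vanishes at `a`.
  set h := fun x => exp (-K * (x - a)) * (f x - B x)
  have hh : ∀ x ∈ Ioo a b, HasDerivAt h (exp (-K * (x - a)) * (deriv f x - K * f x - ε)) x := by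
    intro x hx
    refine (((((hasDerivAt_id x).sub_const a).const_mul (-K)).exp).mul
      ((hf' x hx).hasDerivAt.sub (hB x))).congr_deriv ?_
    simp only [id, Pi.sub_apply]
    ring
  have hanti : AntitoneOn h (Icc a b) := by
    refine antitoneOn_of_deriv_nonpos (convex_Icc a b) ?_ ?_ ?_
    · exact (by fun_prop : Continuous fun x => exp (-K * (x - a))).continuousOn.mul
        (hf.sub (continuous_iff_continuousAt.2 fun x => (hB x).continuousAt).continuousOn)
    · rw [interior_Icc]
      exact fun x hx => (hh x hx).differentiableAt.differentiableWithinAt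
    · rw [interior_Icc]
      intro x hx
      rw [(hh x hx).deriv]
      exact mul_nonpos_of_nonneg_of_nonpos (exp_pos _).le (by linarith [bound x hx])
  intro x hx
  have hx_le : h x ≤ h a := hanti (left_mem_Icc.2 (hx.1.trans hx.2)) hx hx.1
  simp only [h, B, sub_self, gronwallBound_x0, mul_zero] at hx_le
  exact sub_nonpos.1 (nonpos_of_mul_nonpos_right hx_le (exp_pos _))

theorem gronwallBound_le_mul_exp {δ K ε : ℝ} (hK : 0 ≤ K) (hε : 0 ≤ ε) (x : ℝ) :
    gronwallBound δ K ε x ≤ (δ + ε * x) * exp (K * x) := by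
  rcases hK.eq_or_lt with rfl | hK
  · simp [gronwallBound_K0]
  rw [gronwallBound_of_K_ne_0 hK.ne', add_mul, add_le_add_iff_left, div_mul_eq_mul_div,
    div_le_iff₀ hK]
  have hexp : exp (K * x) - 1 ≤ K * x * exp (K * x) := by
    have := add_one_le_exp (-(K * x))
    rw [exp_neg] at this
    nlinarith [exp_pos (K * x), mul_inv_cancel₀ (exp_pos (K * x)).ne']
  nlinarith [mul_le_mul_of_nonneg_left hexp hε]

theorem ContinuousOn.forall_lt_of_bootstrap {e : ℝ → ℝ} {a b M : ℝ}
    (hc : ContinuousOn e (Icc a b)) (ha : e a < M)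
    (hstep : ∀ t ∈ Ioc a b, (∀ s ∈ Icc a t, e s ≤ M) → e t < M) :
    ∀ t ∈ Icc a b, e t < M := by
  by_contra! hexit
  set S := Icc a b ∩ e ⁻¹' Ici M
  have hS : IsClosed S := hc.preimage_isClosed_of_isClosed isClosed_Icc isClosed_Ici
  have hSbdd : BddBelow S := ⟨a, fun s hs => hs.1.1⟩
  obtain ⟨hu, hMu⟩ : sInf S ∈ S := hS.csInf_mem hexit hSbdd
  have hau : a < sInf S := hu.1.lt_of_ne fun h => (h ▸ hMu : M ≤ e a).not_gt ha
  have hbefore : Ico a (sInf S) ⊆ Icc a (sInf S) ∩ e ⁻¹' Iic M := fun s hs =>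
    ⟨Ico_subset_Icc_self hs, show e s ≤ M from le_of_not_ge fun hMs =>
      (csInf_le hSbdd ⟨⟨hs.1, hs.2.le.trans hu.2⟩, hMs⟩).not_gt hs.2⟩
  -- the bound up to the first exit time passes to its closure by continuity
  have hupto : ∀ s ∈ Icc a (sInf S), e s ≤ M := by
    rw [← closure_Ico hau.ne]
    exact fun s hs => ((hc.mono (Icc_subset_Icc_right hu.2)).preimage_isClosed_of_isClosed
      isClosed_Icc isClosed_Iic).closure_subset_iff.2 hbefore hs |>.2
  exact (hstep _ ⟨hau, hu.2⟩ hupto).not_ge hMu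

theorem tendsto_sq_mul_exp_mul_sqrt_mul_exp_neg (c : ℝ) {δ : ℝ} (hδ : 0 < δ) :
    Tendsto (fun x => x ^ 2 * exp (c * √x) * exp (-δ * x)) atTop (𝓝 0) := by
  have hdom : Tendsto (fun x => exp (c ^ 2 / (2 * δ)) * (x ^ (2 : ℝ) * exp (-(δ / 2) * x)))
      atTop (𝓝 0) := by
    simpa using (tendsto_rpow_mul_exp_neg_mul_atTop_nhds_zero 2 (δ / 2) (by positivity)).const_mul
      (exp (c ^ 2 / (2 * δ)))
  refine tendsto_of_tendsto_of_tendsto_of_le_of_le' tendsto_const_nhds hdom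
    (Eventually.of_forall fun x => by positivity) ?_
  filter_upwards [eventually_ge_atTop 0] with x hx
  have hamgm : c * √x ≤ δ / 2 * x + c ^ 2 / (2 * δ) := by
    rw [← sub_nonneg]
    have : δ / 2 * x + c ^ 2 / (2 * δ) - c * √x = (δ * √x - c) ^ 2 / (2 * δ) := by
      field_simp
      linear_combination -δ ^ 2 * sq_sqrt hx
    rw [this]
    positivity
  calc x ^ 2 * exp (c * √x) * exp (-δ * x)
      ≤ x ^ 2 * exp (δ / 2 * x + c ^ 2 / (2 * δ)) * exp (-δ * x) := by gcongr
    _ = exp (c ^ 2 / (2 * δ)) * (x ^ (2 : ℝ) * exp (-(δ / 2) * x)) := by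
      rw [rpow_two, mul_assoc, ← exp_add, mul_left_comm, ← exp_add]
      ring_nf

theorem eventually_mul_sq_log_mul_exp_mul_sqrt_log_mul_rpow_lt (b c : ℝ) {p q : ℝ} (hpq : p < q) :
    ∀ᶠ N : ℝ in atTop, b * log N ^ 2 * exp (c * √(log N)) * N ^ (-q) < N ^ (-p) := by
  have hlim := ((tendsto_sq_mul_exp_mul_sqrt_mul_exp_neg c (sub_pos.2 hpq)).const_mul b).comp
    tendsto_log_atTop
  rw [mul_zero] at hlim
  filter_upwards [hlim.eventually (gt_mem_nhds one_pos), eventually_gt_atTop 0] with N hN hN0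
  have hsplit : N ^ (-q) = exp (-(q - p) * log N) * N ^ (-p) := by
    rw [rpow_def_of_pos hN0, rpow_def_of_pos hN0, ← exp_add]
    ring_nf
  calc b * log N ^ 2 * exp (c * √(log N)) * N ^ (-q)
      = b * (log N ^ 2 * exp (c * √(log N)) * exp (-(q - p) * log N)) * N ^ (-p) := by
        rw [hsplit]; ring
    _ < 1 * N ^ (-p) := mul_lt_mul_of_pos_right hN (rpow_pos_of_pos hN0 _)
    _ = N ^ (-p) := one_mul _

theorem conditional_gronwall_general (C T lam2 lam3 : ℝ)
    (hC : 0 < C) (hlam : lam2 < lam3) :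
    ∃ N₀ : ℕ, ∀ N : ℕ, N₀ ≤ N →
      ∀ e : ℝ → ℝ,
        ContinuousOn e (Icc 0 T) →
        e 0 = 0 →
        (∀ t ∈ Icc (0 : ℝ) T, 0 ≤ e t) →
        (∀ t ∈ Ioc (0 : ℝ) T, DifferentiableAt ℝ e t) →
        (∀ T₁, 0 < T₁ → T₁ ≤ T →
          (∀ t ∈ Icc (0 : ℝ) T₁, e t ≤ (N : ℝ) ^ (-lam2)) →
          (∀ t ∈ Ioc (0 : ℝ) T₁,
            deriv e t ≤ C * Real.sqrt (Real.log N) * e t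
              + C * (Real.log N) ^ 2 * (N : ℝ) ^ (-lam3))) →
        ∀ t ∈ Icc (0 : ℝ) T, e t ≤ (N : ℝ) ^ (-lam2) := by
  obtain ⟨N₀, hN₀⟩ := eventually_atTop.1 <| tendsto_natCast_atTop_atTop.eventually <|
    (eventually_mul_sq_log_mul_exp_mul_sqrt_log_mul_rpow_lt (C * T) (C * T) hlam).and
      (eventually_gt_atTop 0)
  refine ⟨N₀, fun N hN e hc he0 _ hd hderiv t ht => ?_⟩
  obtain ⟨hsmall, hNpos⟩ := hN₀ N hN
  have hstart : e 0 < (N : ℝ) ^ (-lam2) := by rw [he0]; exact rpow_pos_of_pos hNpos _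
  refine (hc.forall_lt_of_bootstrap hstart (fun t₁ ⟨ht₁_pos, ht₁_le⟩ hbound => ?_) t ht).le
  have hgron := le_gronwallBound_of_deriv_le (hc.mono (Icc_subset_Icc_right ht₁_le))
    (fun s hs => hd s ⟨hs.1, hs.2.le.trans ht₁_le⟩)
    (fun s hs => hderiv t₁ ht₁_pos ht₁_le hbound s ⟨hs.1, hs.2.le⟩) t₁ ⟨ht₁_pos.le, le_rfl⟩
  rw [he0, sub_zero] at hgron
  have hT : 0 ≤ T := ht₁_pos.le.trans ht₁_le
  calc e t₁
      ≤ (0 + C * log N ^ 2 * (N : ℝ) ^ (-lam3) * t₁) * exp (C * √(log N) * t₁) :=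
        hgron.trans (gronwallBound_le_mul_exp (by positivity) (by positivity) t₁)
    _ ≤ (0 + C * log N ^ 2 * (N : ℝ) ^ (-lam3) * T) * exp (C * √(log N) * T) := by gcongr
    _ = C * T * log N ^ 2 * exp (C * T * √(log N)) * (N : ℝ) ^ (-lam3) := by ring_nf
    _ < (N : ℝ) ^ (-lam2) := hsmall

/-- generalized conditional Gronwall lemma. -/
theorem conditional_gronwall (C T lam2 lam3 : ℝ)
    (hC : 0 < C) (hT : 0 < T) (hlam2 : 0 < lam2) (hlam : lam2 < lam3) :
    ∃ N₀ : ℕ, ∀ N : ℕ, N₀ ≤ N →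
      ∀ e : ℝ → ℝ,
        ContinuousOn e (Icc 0 T) →
        e 0 = 0 →
        (∀ t ∈ Icc (0 : ℝ) T, 0 ≤ e t) →
        (∀ t ∈ Ioc (0 : ℝ) T, DifferentiableAt ℝ e t) →
        (∀ T₁, 0 < T₁ → T₁ ≤ T →
          (∀ t ∈ Icc (0 : ℝ) T₁, e t ≤ (N : ℝ) ^ (-lam2)) →
          (∀ t ∈ Ioc (0 : ℝ) T₁,
            deriv e t ≤ C * Real.sqrt (Real.log N) * e t
              + C * (Real.log N) ^ 2 * (N : ℝ) ^ (-lam3))) →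
        ∀ t ∈ Icc (0 : ℝ) T, e t ≤ (N : ℝ) ^ (-lam2) :=
  conditional_gronwall_general C T lam2 lam3 hC hlam
end
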